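/- arXiv:1812.07112 — 2 statements merged into one kernel-verified Lean document; each statement's English description precedes it below -/
import Mathlib

section
/- For all n ≥ 1 and k ≥ 0, the quantities a_{n,k}^{asc}(132,213), a_{n,k}^{des}(132,213), a_{n,k}^{asc}(213,231), and a_{n,k}^{des}(213,231) are all equal to C(n−1, k). -/
open scoped Classical

/-- The word `π₁π₂⋯π_n` of a permutation of `{1,…,n}`, with values in `{1,…,n}`. -/
def permWord {n : ℕ} (π : Equiv.Perm (Fin n)) : List ℕ :=
  List.ofFn fun i => (π i : ℕ) + 1

/-- The word `l` contains the word `ρ` as a (classical) pattern. -/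
def ContainsPat (l ρ : List ℕ) : Prop :=
  ∃ f : Fin ρ.length → Fin l.length, StrictMono f ∧
    ∀ a b : Fin ρ.length, ρ.get a < ρ.get b ↔ l.get (f a) < l.get (f b)

/-- `l` avoids every pattern in the list `B`. -/
def AvoidsAll (l : List ℕ) (B : List (List ℕ)) : Prop :=
  ∀ ρ ∈ B, ¬ ContainsPat l ρ

/-- Number of ascents of the word `l`. -/
def ascents (l : List ℕ) : ℕ :=
  ((Finset.range (l.length - 1)).filter fun i => l.getD i 0 < l.getD (i + 1) 0).card

/-- Number of descents of the word `l`. -/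
def descents (l : List ℕ) : ℕ :=
  ((Finset.range (l.length - 1)).filter fun i => l.getD (i + 1) 0 < l.getD i 0).card

/-- Number of double ascents of the word `l`. -/
def dascents (l : List ℕ) : ℕ :=
  ((Finset.range (l.length - 2)).filter fun i =>
    l.getD i 0 < l.getD (i + 1) 0 ∧ l.getD (i + 1) 0 < l.getD (i + 2) 0).card

/-- Number of double descents of the word `l`. -/
def ddescents (l : List ℕ) : ℕ :=
  ((Finset.range (l.length - 2)).filter fun i =>
    l.getD (i + 1) 0 < l.getD i 0 ∧ l.getD (i + 2) 0 < l.getD (i + 1) 0).card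

/-- Number of peaks of the word `l`. -/
def peaks (l : List ℕ) : ℕ :=
  ((Finset.range (l.length - 2)).filter fun i =>
    l.getD i 0 < l.getD (i + 1) 0 ∧ l.getD (i + 2) 0 < l.getD (i + 1) 0).card

/-- Number of valleys of the word `l`. -/
def valleys (l : List ℕ) : ℕ :=
  ((Finset.range (l.length - 2)).filter fun i =>
    l.getD (i + 1) 0 < l.getD i 0 ∧ l.getD (i + 1) 0 < l.getD (i + 2) 0).card

/-- `acount n k stat B` is the number of permutations of `{1,…,n}` avoiding all
patterns in `B` whose statistic `stat` equals `k`. -/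
noncomputable def acount (n k : ℕ) (stat : List ℕ → ℕ) (B : List (List ℕ)) : ℕ :=
  (Finset.univ.filter fun π : Equiv.Perm (Fin n) =>
    AvoidsAll (permWord π) B ∧ stat (permWord π) = k).card

/-!
For `i < j`, a permutation avoiding 132 and 213 satisfies `π i < π j` exactly when every position
in `[i, j)` is an ascent, and one avoiding 213 and 231 exactly when `i` is an ascent. In either
class the relative order of any two entries is thus dictated by the ascent set, so the ascent set
determines the permutation; conversely, for every set `A` of positions the dictated comparisons
form a total order on positions, and ranking the positions in it gives a permutation of the class
with ascent set `A`. So the ascent set is a bijection onto the subsets of `{1, …, n - 1}`, which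
gives `C(n - 1, k)` for `asc = k`, and `des = n - 1 - asc` together with `C(n - 1, n - 1 - k) =
C(n - 1, k)` gives the count for descents.
-/

open Finset

variable {n : ℕ}

lemma permWord_length (π : Equiv.Perm (Fin n)) : (permWord π).length = n := by
  simp [permWord]

lemma getD_permWord (π : Equiv.Perm (Fin n)) {t : ℕ} (ht : t < n) :
    (permWord π).getD t 0 = π ⟨t, ht⟩ + 1 := by
  simp [permWord, List.getD_eq_getElem?_getD, ht]

lemma containsPat_permWord_iff (π : Equiv.Perm (Fin n)) (ρ : List ℕ) :
    ContainsPat (permWord π) ρ ↔ ∃ f : Fin ρ.length → Fin n, StrictMono f ∧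
      ∀ a b, ρ.get a < ρ.get b ↔ π (f a) < π (f b) := by
  let e := Fin.castOrderIso (permWord_length π)
  have hget (i) : (permWord π).get i = π (e i) + 1 := List.get_ofFn _ _
  constructor
  · rintro ⟨f, hf, hρ⟩
    refine ⟨e ∘ f, e.strictMono.comp hf, fun a b => ?_⟩
    simp only [hρ, hget, Nat.add_lt_add_iff_right, Fin.val_fin_lt, Function.comp_apply]
  · rintro ⟨f, hf, hρ⟩
    refine ⟨e.symm ∘ f, e.symm.strictMono.comp hf, fun a b => ?_⟩
    simp only [hρ, hget, Nat.add_lt_add_iff_right, Fin.val_fin_lt, Function.comp_apply,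
      OrderIso.apply_symm_apply]

lemma containsPat_permWord_triple_iff (π : Equiv.Perm (Fin n)) (x y z : ℕ) :
    ContainsPat (permWord π) [x, y, z] ↔ ∃ i j k : Fin n, i < j ∧ j < k ∧
      (x < y ↔ π i < π j) ∧ (y < x ↔ π j < π i) ∧ (x < z ↔ π i < π k) ∧
      (z < x ↔ π k < π i) ∧ (y < z ↔ π j < π k) ∧ (z < y ↔ π k < π j) := by
  rw [containsPat_permWord_iff]
  constructor
  · rintro ⟨f, hf, hρ⟩
    exact ⟨f 0, f 1, f 2, hf (by decide : (0 : Fin 3) < 1), hf (by decide : (1 : Fin 3) < 2),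
      hρ 0 1, hρ 1 0, hρ 0 2, hρ 2 0, hρ 1 2, hρ 2 1⟩
  · rintro ⟨i, j, k, hij, hjk, h⟩
    refine ⟨![i, j, k], ?_, ?_⟩
    · refine Fin.strictMono_iff_lt_succ.2 fun a => ?_
      fin_cases a <;> simpa
    · intro a b
      fin_cases a <;> fin_cases b <;> simp [h]

lemma containsPat_132_iff (π : Equiv.Perm (Fin n)) :
    ContainsPat (permWord π) [1, 3, 2] ↔
      ∃ i j k : Fin n, i < j ∧ j < k ∧ π i < π k ∧ π k < π j := by
  rw [containsPat_permWord_triple_iff]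
  refine exists₃_congr fun i j k => ?_
  simp only [Fin.lt_def]
  omega

lemma containsPat_213_iff (π : Equiv.Perm (Fin n)) :
    ContainsPat (permWord π) [2, 1, 3] ↔
      ∃ i j k : Fin n, i < j ∧ j < k ∧ π j < π i ∧ π i < π k := by
  rw [containsPat_permWord_triple_iff]
  refine exists₃_congr fun i j k => ?_
  simp only [Fin.lt_def]
  omega

lemma containsPat_231_iff (π : Equiv.Perm (Fin n)) :
    ContainsPat (permWord π) [2, 3, 1] ↔
      ∃ i j k : Fin n, i < j ∧ j < k ∧ π k < π i ∧ π i < π j := by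
  rw [containsPat_permWord_triple_iff]
  refine exists₃_congr fun i j k => ?_
  simp only [Fin.lt_def]
  omega

def ascentSet (π : Equiv.Perm (Fin n)) : Finset ℕ :=
  (range (n - 1)).filter fun t => (permWord π).getD t 0 < (permWord π).getD (t + 1) 0

lemma ascents_permWord (π : Equiv.Perm (Fin n)) : ascents (permWord π) = #(ascentSet π) := by
  rw [ascents, permWord_length, ascentSet]

lemma ascentSet_subset_range (π : Equiv.Perm (Fin n)) : ascentSet π ⊆ range (n - 1) :=
  filter_subset _ _

lemma mem_ascentSet (π : Equiv.Perm (Fin n)) {i : Fin n} (h : (i : ℕ) + 1 < n) :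
    (i : ℕ) ∈ ascentSet π ↔ π i < π ⟨i + 1, h⟩ := by
  simp only [ascentSet, mem_filter, mem_range, getD_permWord π h, getD_permWord π i.2,
    Nat.add_lt_add_iff_right, Fin.val_fin_lt]
  exact and_iff_right (by omega)

lemma descents_add_ascents_permWord (π : Equiv.Perm (Fin n)) :
    descents (permWord π) + ascents (permWord π) = n - 1 := by
  set w := permWord π
  have hdes : (range (n - 1)).filter (fun t => w.getD (t + 1) 0 < w.getD t 0) =
      (range (n - 1)).filter (fun t => ¬ w.getD t 0 < w.getD (t + 1) 0) := by
    refine filter_congr fun t ht => ?_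
    have ht : t + 1 < n := by simp only [mem_range] at ht; omega
    have hne : π ⟨t, by omega⟩ ≠ π ⟨t + 1, ht⟩ := by simp
    rw [getD_permWord π ht, getD_permWord π (by omega)]
    rw [← Fin.val_ne_iff] at hne
    omega
  rw [descents, ascents, permWord_length, hdes, add_comm, card_filter_add_card_filter_not,
    card_range]

lemma not_mem_ascentSet (π : Equiv.Perm (Fin n)) {i : Fin n} (h : (i : ℕ) + 1 < n) :
    (i : ℕ) ∉ ascentSet π ↔ π ⟨i + 1, h⟩ < π i := by
  rw [mem_ascentSet π h, not_lt]
  exact (π.injective.ne (by simp [Fin.ext_iff])).le_iff_lt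

lemma lt_of_forall_mem_ascentSet (π : Equiv.Perm (Fin n)) {i j : Fin n} (hij : i < j)
    (h : ∀ t, (i : ℕ) ≤ t → t < j → t ∈ ascentSet π) : π i < π j := by
  obtain ⟨j, hj⟩ := j
  simp only [Fin.lt_def] at hij h
  induction j with
  | zero => exact absurd hij (Nat.not_lt_zero _)
  | succ j ih =>
    have hstep : π ⟨j, by omega⟩ < π ⟨j + 1, hj⟩ :=
      (mem_ascentSet π (i := ⟨j, by omega⟩) hj).1 (h j (by omega) (by simp))
    by_cases hi : (i : ℕ) = j
    · rwa [show i = ⟨j, by omega⟩ from Fin.ext hi]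
    · exact (ih (by omega) (fun t hit htj => h t hit (by omega)) (by omega)).trans hstep

lemma Equiv.Perm.eq_of_lt_iff_lt {π σ : Equiv.Perm (Fin n)}
    (h : ∀ i j, i < j → (π i < π j ↔ σ i < σ j)) : π = σ := by
  have hmono : StrictMono (σ ∘ π.symm) := by
    intro a b hab
    obtain hlt | heq | hgt := lt_trichotomy (π.symm a) (π.symm b)
    · exact (h _ _ hlt).1 (by simpa using hab)
    · simp_all
    · have := (h _ _ hgt).not.1 (by simpa using hab.not_gt)
      exact lt_of_le_of_ne (not_lt.1 this) (by simp [hab.ne])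
  have hid := congrArg DFunLike.coe
    (Subsingleton.elim (hmono.orderIsoOfSurjective _ (σ.surjective.comp π.symm.surjective))
      (OrderIso.refl _))
  exact Equiv.ext fun i => by simpa using (congrFun hid (π i)).symm

def RuleLT (R : ℕ → ℕ → Prop) (i j : Fin n) : Prop :=
  (i < j ∧ R i j) ∨ (j < i ∧ ¬ R j i)

/-- Exactly the conditions under which `RuleLT R` is transitive. -/
structure IsOrderRule (R : ℕ → ℕ → Prop) : Prop where
  trans : ∀ ⦃a b c⦄, a < b → b < c → R a b → R b c → R a c
  right_of_not_left : ∀ ⦃a b c⦄, a < b → b < c → ¬ R a b → R a c → R b c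
  left_of_outer : ∀ ⦃a b c⦄, a < b → b < c → R a c → R a b

lemma ruleLT_irrefl (R : ℕ → ℕ → Prop) (i : Fin n) : ¬ RuleLT R i i := by
  simp [RuleLT]

lemma ruleLT_or_ruleLT (R : ℕ → ℕ → Prop) {i j : Fin n} (hij : i ≠ j) :
    RuleLT R i j ∨ RuleLT R j i := by
  unfold RuleLT
  obtain h | h := hij.lt_or_gt <;> by_cases hR : R i j <;> by_cases hR' : R j i <;> simp_all

noncomputable def ruleRank (R : ℕ → ℕ → Prop) (i : Fin n) : ℕ := #{j | RuleLT R j i}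

lemma ruleRank_lt (R : ℕ → ℕ → Prop) (i : Fin n) : ruleRank R i < n :=
  calc ruleRank R i < #(univ : Finset (Fin n)) :=
        card_lt_card (filter_ssubset.2 ⟨i, mem_univ _, ruleLT_irrefl R i⟩)
    _ = n := card_fin n

namespace IsOrderRule

variable {R : ℕ → ℕ → Prop} (hR : IsOrderRule R)
include hR

lemma ruleLT_trans {i j k : Fin n} (hij : RuleLT R i j) (hjk : RuleLT R j k) : RuleLT R i k := by
  unfold RuleLT at *
  obtain ⟨hij, Rij⟩ | ⟨hji, Rji⟩ := hij <;> obtain ⟨hjk, Rjk⟩ | ⟨hkj, Rkj⟩ := hjk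
  · exact .inl ⟨hij.trans hjk, hR.trans hij hjk Rij Rjk⟩
  · obtain hik | rfl | hki := lt_trichotomy i k
    · exact .inl ⟨hik, hR.left_of_outer hik hkj Rij⟩
    · exact absurd Rij Rkj
    · exact .inr ⟨hki, fun Rki => Rkj (hR.trans hki hij Rki Rij)⟩
  · obtain hik | rfl | hki := lt_trichotomy i k
    · exact .inl ⟨hik, hR.right_of_not_left hji hik Rji Rjk⟩
    · exact absurd Rjk Rji
    · exact .inr ⟨hki, fun Rki => Rji (hR.trans hjk hki Rjk Rki)⟩
  · exact .inr ⟨hkj.trans hji, fun Rki => Rkj (hR.left_of_outer hkj hji Rki)⟩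

lemma ruleRank_lt_ruleRank {i j : Fin n} (h : RuleLT R i j) : ruleRank R i < ruleRank R j := by
  refine card_lt_card ((ssubset_iff_of_subset fun k hk => ?_).2 ⟨i, ?_, ?_⟩)
  · simp only [mem_filter, mem_univ, true_and] at hk ⊢
    exact hR.ruleLT_trans hk h
  · simpa using h
  · simpa using ruleLT_irrefl R i

lemma ruleRank_injective :
    Function.Injective fun i : Fin n => (⟨ruleRank R i, ruleRank_lt R i⟩ : Fin n) := by
  intro i j hij
  by_contra hne
  obtain h | h := ruleLT_or_ruleLT R hne <;>
    · have := hR.ruleRank_lt_ruleRank h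
      simp_all

noncomputable def perm : Equiv.Perm (Fin n) :=
  Equiv.ofBijective _ (Finite.injective_iff_bijective.1 hR.ruleRank_injective)

lemma perm_lt_perm_iff {i j : Fin n} (hij : i < j) : hR.perm i < hR.perm j ↔ R i j := by
  refine ⟨fun h => ?_, fun h => hR.ruleRank_lt_ruleRank (.inl ⟨hij, h⟩)⟩
  by_contra hR'
  exact (hR.ruleRank_lt_ruleRank (.inr ⟨hij, hR'⟩)).not_gt h

end IsOrderRule

def FollowsRule (R : Finset ℕ → ℕ → ℕ → Prop) (π : Equiv.Perm (Fin n)) : Prop :=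
  ∀ i j : Fin n, i < j → (π i < π j ↔ R (ascentSet π) i j)

lemma perm_ascentSet_eq {R : Finset ℕ → ℕ → ℕ → Prop} (hR : ∀ A, IsOrderRule (R A))
    {π : Equiv.Perm (Fin n)} (hπ : FollowsRule R π) : (hR (ascentSet π)).perm = π :=
  Equiv.Perm.eq_of_lt_iff_lt fun i j hij => by rw [IsOrderRule.perm_lt_perm_iff _ hij, hπ i j hij]

section Counting

variable {R : Finset ℕ → ℕ → ℕ → Prop} (hR : ∀ A, IsOrderRule (R A))
  (hsucc : ∀ A t, R A t (t + 1) ↔ t ∈ A)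
include hR hsucc

lemma ascentSet_perm {A : Finset ℕ} (hA : A ⊆ range (n - 1)) :
    ascentSet ((hR A).perm (n := n)) = A := by
  ext t
  by_cases ht : t < n - 1
  · rw [mem_ascentSet _ (i := ⟨t, by omega⟩) (by simp only; omega),
      IsOrderRule.perm_lt_perm_iff _ (Nat.lt_succ_self t), hsucc]
  · exact iff_of_false (fun h => ht (by simpa using ascentSet_subset_range _ h))
      (fun h => ht (by simpa using hA h))

lemma followsRule_perm {A : Finset ℕ} (hA : A ⊆ range (n - 1)) :
    FollowsRule R ((hR A).perm (n := n)) := by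
  intro i j hij
  rw [ascentSet_perm hR hsucc hA, IsOrderRule.perm_lt_perm_iff _ hij]

lemma card_followsRule_ascentSet (k : ℕ) :
    #{π : Equiv.Perm (Fin n) | FollowsRule R π ∧ #(ascentSet π) = k} = (n - 1).choose k := by
  rw [← card_range (n - 1), ← card_powersetCard]
  refine card_bij' (fun π _ => ascentSet π) (fun A _ => (hR A).perm) ?_ ?_ ?_ ?_
  · intro π hπ
    simp only [mem_filter, mem_univ, true_and] at hπ
    exact mem_powersetCard.2 ⟨ascentSet_subset_range π, hπ.2⟩
  · intro A hA
    obtain ⟨hA, hk⟩ := mem_powersetCard.1 hA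
    simp only [mem_filter, mem_univ, true_and]
    exact ⟨followsRule_perm hR hsucc hA, by rw [ascentSet_perm hR hsucc hA, hk]⟩
  · intro π hπ
    exact perm_ascentSet_eq hR (mem_filter.1 hπ).2.1
  · intro A hA
    exact ascentSet_perm hR hsucc (mem_powersetCard.1 hA).1

end Counting

lemma acount_ascents_eq_choose {B : List (List ℕ)} {R : Finset ℕ → ℕ → ℕ → Prop}
    (hR : ∀ A, IsOrderRule (R A)) (hsucc : ∀ A t, R A t (t + 1) ↔ t ∈ A)
    (hB : ∀ π : Equiv.Perm (Fin n), AvoidsAll (permWord π) B ↔ FollowsRule R π) (k : ℕ) :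
    acount n k ascents B = (n - 1).choose k := by
  simp only [acount, hB, ascents_permWord]
  exact card_followsRule_ascentSet hR hsucc k

lemma acount_descents_eq_choose {B : List (List ℕ)}
    (h : ∀ k, acount n k ascents B = (n - 1).choose k) (k : ℕ) :
    acount n k descents B = (n - 1).choose k := by
  by_cases hk : k ≤ n - 1
  · rw [← Nat.choose_symm hk, ← h, acount, acount]
    congr 1
    refine filter_congr fun π _ => and_congr_right fun _ => ?_
    have := descents_add_ascents_permWord π
    omega
  · rw [Nat.choose_eq_zero_of_lt (by omega), acount, card_eq_zero, filter_eq_empty_iff]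
    intro π _ ⟨_, hdes⟩
    have := descents_add_ascents_permWord π
    omega

def runRule (A : Finset ℕ) (a b : ℕ) : Prop := ∀ t, a ≤ t → t < b → t ∈ A

def headRule (A : Finset ℕ) (a _ : ℕ) : Prop := a ∈ A

lemma isOrderRule_runRule (A : Finset ℕ) : IsOrderRule (runRule A) where
  trans _ b _ _ _ hab hbc t hat htc := (lt_or_ge t b).elim (hab t hat) (hbc t · htc)
  right_of_not_left _ _ _ hab _ _ hac t hbt htc := hac t (by omega) htc
  left_of_outer _ _ _ _ hbc hac t hat htb := hac t hat (by omega)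

lemma runRule_succ (A : Finset ℕ) (t : ℕ) : runRule A t (t + 1) ↔ t ∈ A :=
  ⟨fun h => h t le_rfl (by omega), fun h s hts hst => (by omega : s = t) ▸ h⟩

lemma isOrderRule_headRule (A : Finset ℕ) : IsOrderRule (headRule A) where
  trans _ _ _ _ _ hab _ := hab
  right_of_not_left _ _ _ _ _ hab hac := (hab hac).elim
  left_of_outer _ _ _ _ _ hac := hac

lemma headRule_succ (A : Finset ℕ) (t : ℕ) : headRule A t (t + 1) ↔ t ∈ A := Iff.rfl

lemma avoidsAll_132_213_iff (π : Equiv.Perm (Fin n)) :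
    AvoidsAll (permWord π) [[1, 3, 2], [2, 1, 3]] ↔ FollowsRule runRule π := by
  simp only [AvoidsAll, List.forall_mem_cons, List.not_mem_nil, IsEmpty.forall_iff,
    forall_const, and_true, containsPat_132_iff, containsPat_213_iff, not_exists, not_and]
  refine ⟨fun ⟨h132, h213⟩ i j hij => ⟨fun hlt t hit htj => ?_,
    lt_of_forall_mem_ascentSet π hij⟩, fun h => ⟨?_, ?_⟩⟩
  · -- a descent at `t` produces a 132 through `i, t, j` or a 213 through `t, t + 1, j`
    by_contra hasc
    have ht : t + 1 < n := by omega
    have hdesc := (not_mem_ascentSet π (i := ⟨t, by omega⟩) ht).1 hasc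
    obtain hjt | htj' := (π.injective.ne (Fin.ne_of_val_ne (by simp only; omega) :
      j ≠ ⟨t, by omega⟩)).lt_or_gt
    · have hit' : (i : ℕ) < t := lt_of_le_of_ne hit fun hti => by
        subst hti
        exact lt_asymm hlt hjt
      exact h132 i ⟨t, by omega⟩ j hit' htj hlt hjt
    · have htj'' : t + 1 < j := lt_of_le_of_ne htj fun htj'' => by
        rw [show j = ⟨t + 1, ht⟩ from Fin.ext htj''.symm] at htj'
        exact lt_asymm htj' hdesc
      exact h213 ⟨t, by omega⟩ ⟨t + 1, ht⟩ j (Nat.lt_succ_self t) htj'' hdesc htj'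
  · intro i j k hij hjk hik hkj
    exact lt_asymm hkj ((h j k hjk).2 fun t hjt htk =>
      (h i k (hij.trans hjk)).1 hik t (by omega) htk)
  · intro i j k hij hjk hji hik
    exact lt_asymm hji ((h i j hij).2 fun t hit htj =>
      (h i k (hij.trans hjk)).1 hik t hit (by omega))

lemma avoidsAll_213_231_iff (π : Equiv.Perm (Fin n)) :
    AvoidsAll (permWord π) [[2, 1, 3], [2, 3, 1]] ↔ FollowsRule headRule π := by
  simp only [AvoidsAll, List.forall_mem_cons, List.not_mem_nil, IsEmpty.forall_iff,
    forall_const, and_true, containsPat_213_iff, containsPat_231_iff, not_exists, not_and]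
  refine ⟨fun ⟨h213, h231⟩ i j hij => ?_, fun h => ⟨?_, ?_⟩⟩
  · have hi : (i : ℕ) + 1 < n := by omega
    have hii : i < ⟨i + 1, hi⟩ := Nat.lt_succ_self i
    unfold headRule
    obtain hnext | hnext := (show (i : ℕ) + 1 ≤ j from hij).eq_or_lt
    · rw [mem_ascentSet π hi, show j = ⟨i + 1, hi⟩ from Fin.ext hnext.symm]
    constructor
    · intro hlt
      by_contra hasc
      exact h213 i _ j hii hnext ((not_mem_ascentSet π hi).1 hasc) hlt
    · intro hasc
      by_contra hge
      have hji := lt_of_le_of_ne (not_lt.1 hge) (π.injective.ne hij.ne')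
      exact h231 i _ j hii hnext hji ((mem_ascentSet π hi).1 hasc)
  · intro i j k hij hjk hji hik
    exact lt_asymm hji ((h i j hij).2 ((h i k (hij.trans hjk)).1 hik))
  · intro i j k hij hjk hki hij'
    exact lt_asymm hki ((h i k (hij.trans hjk)).2 ((h i j hij).1 hij'))

theorem stmt9_general (n k : ℕ) :
    acount n k ascents [[1,3,2],[2,1,3]] = Nat.choose (n - 1) k ∧
    acount n k descents [[1,3,2],[2,1,3]] = Nat.choose (n - 1) k ∧
    acount n k ascents [[2,1,3],[2,3,1]] = Nat.choose (n - 1) k ∧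
    acount n k descents [[2,1,3],[2,3,1]] = Nat.choose (n - 1) k := by
  have asc_132_213 := acount_ascents_eq_choose isOrderRule_runRule runRule_succ
    (avoidsAll_132_213_iff (n := n))
  have asc_213_231 := acount_ascents_eq_choose isOrderRule_headRule headRule_succ
    (avoidsAll_213_231_iff (n := n))
  exact ⟨asc_132_213 k, acount_descents_eq_choose asc_132_213 k,
    asc_213_231 k, acount_descents_eq_choose asc_213_231 k⟩

theorem stmt9 (n k : ℕ) (hn : 1 ≤ n) :
    acount n k ascents [[1,3,2],[2,1,3]] = Nat.choose (n - 1) k ∧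
    acount n k descents [[1,3,2],[2,1,3]] = Nat.choose (n - 1) k ∧
    acount n k ascents [[2,1,3],[2,3,1]] = Nat.choose (n - 1) k ∧
    acount n k descents [[2,1,3],[2,3,1]] = Nat.choose (n - 1) k :=
  stmt9_general n k
end

section
/- For all n ≥ 3 and k ≥ 0, the number of permutations of length n avoiding both 123 and 132 with exactly k double descents equals C(n−2, k) + 2·C(n−3, k). -/
/-!
In a word avoiding 123 and 132 every entry has at most one larger entry to its right. Hence an
arrangement of a finite set `S` avoiding both patterns starts with the largest element `M` or the
second largest `m` of `S`, followed by such an arrangement of the remaining elements.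

Whether a new entry completes a double descent depends only on the two entries before it, so we
take the generating polynomial of double descents of `p ++ r`, over the avoiders `r` of `S`, for a
fixed prefix `p`. Two kinds of prefix reproduce themselves: a single entry above all of `S`
(polynomial `P`), and a descent `t > v` where `v` lies below the maximum of `S` and above the rest
of `S` (polynomial `Q`). Placing `M` or `m` next gives `P_{n+1} = X P_n + Q_n` and
`Q_{n+1} = P_n + X Q_n`, indexing by `|S| - 1`, so `P_n = Q_n = (1 + X)^n`. For `|S| = n ≥ 3`, a
word starts with `M` (contributing `P_{n-2}`), with `m M` (`P_{n-3}`) or with `m m'`, where `m'`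
is the third largest element (`Q_{n-3}`). This gives `(1 + X)^(n-2) + 2 (1 + X)^(n-3)`.
-/

open scoped Classical

open scoped List
open Polynomial

theorem containsPat_iff_exists_sublist {l ρ : List ℕ} :
    ContainsPat l ρ ↔ ∃ s, s <+ l ∧ ∃ h : ρ.length = s.length,
      ∀ a b, ρ.get a < ρ.get b ↔ s.get (a.cast h) < s.get (b.cast h) := by
  constructor
  · rintro ⟨f, hf, hρ⟩
    refine ⟨List.ofFn (l.get ∘ f), ?_, List.length_ofFn.symm, by simpa using hρ⟩
    rw [List.sublist_iff_exists_fin_orderEmbedding_get_eq]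
    exact ⟨(Fin.castOrderIso List.length_ofFn).toOrderEmbedding.trans
      (OrderEmbedding.ofStrictMono f hf), fun i => by rw [List.get_ofFn]; rfl⟩
  · rintro ⟨s, hs, h, hρs⟩
    obtain ⟨g, hg⟩ := List.sublist_iff_exists_fin_orderEmbedding_get_eq.mp hs
    refine ⟨g ∘ Fin.cast h, g.strictMono.comp (Fin.cast_strictMono h), fun a b => ?_⟩
    simp only [Function.comp_apply, ← hg, hρs]

theorem containsPat_triple_iff {l : List ℕ} {p q r : ℕ} :
    ContainsPat l [p, q, r] ↔ ∃ x y z, [x, y, z] <+ l ∧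
      ∀ a b : Fin 3, [p, q, r].get a < [p, q, r].get b ↔ [x, y, z].get a < [x, y, z].get b := by
  rw [containsPat_iff_exists_sublist]
  constructor
  · rintro ⟨s, hs, h, hρs⟩
    obtain ⟨x, y, z, rfl⟩ := List.length_eq_three.mp h.symm
    exact ⟨x, y, z, hs, hρs⟩
  · rintro ⟨x, y, z, hs, hρs⟩
    exact ⟨_, hs, rfl, hρs⟩

theorem containsPat_123_iff {l : List ℕ} :
    ContainsPat l [1, 2, 3] ↔ ∃ x y z, [x, y, z] <+ l ∧ x < y ∧ y < z := by
  refine containsPat_triple_iff.trans (exists₃_congr fun x y z => and_congr_right fun _ => ?_)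
  simp only [Fin.forall_fin_succ, IsEmpty.forall_iff, List.get_eq_getElem, Fin.val_zero,
    Fin.val_succ, List.getElem_cons_zero, List.getElem_cons_succ, and_true]
  omega

theorem containsPat_132_iff_s13 {l : List ℕ} :
    ContainsPat l [1, 3, 2] ↔ ∃ x y z, [x, y, z] <+ l ∧ x < z ∧ z < y := by
  refine containsPat_triple_iff.trans (exists₃_congr fun x y z => and_congr_right fun _ => ?_)
  simp only [Fin.forall_fin_succ, IsEmpty.forall_iff, List.get_eq_getElem, Fin.val_zero,
    Fin.val_succ, List.getElem_cons_zero, List.getElem_cons_succ, and_true]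
  omega

def Avoids123And132 (l : List ℕ) : Prop :=
  ∀ x y z, [x, y, z] <+ l → x < y → x < z → y = z

theorem avoidsAll_iff_avoids123And132 (l : List ℕ) :
    AvoidsAll l [[1, 2, 3], [1, 3, 2]] ↔ Avoids123And132 l := by
  simp only [AvoidsAll, List.forall_mem_cons, List.not_mem_nil, IsEmpty.forall_iff,
    forall_const, and_true, containsPat_123_iff, containsPat_132_iff_s13, not_exists, not_and]
  constructor
  · rintro ⟨h123, h132⟩ x y z hs hxy hxz
    by_contra hyz
    rcases Nat.lt_or_gt_of_ne hyz with h | h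
    exacts [h123 x y z hs hxy h, h132 x y z hs hxz h]
  · intro h
    exact ⟨fun x y z hs hxy hyz => hyz.ne (h x y z hs hxy (hxy.trans hyz)),
      fun x y z hs hxz hzy => hzy.ne' (h x y z hs (hxz.trans hzy) hxz)⟩

theorem avoids123And132_cons {a : ℕ} {r : List ℕ} :
    Avoids123And132 (a :: r) ↔
      Avoids123And132 r ∧ ∀ y z, [y, z] <+ r → a < y → a < z → y = z := by
  constructor
  · intro h
    exact ⟨fun x y z hs => h x y z (hs.cons a), fun y z hs => h a y z (hs.cons_cons a)⟩
  · rintro ⟨hr, ha⟩ x y z hs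
    rcases List.sublist_cons_iff.mp hs with hs | ⟨t, ht, hs⟩
    · exact hr x y z hs
    · obtain ⟨rfl, rfl⟩ := List.cons_eq_cons.mp ht
      exact ha y z hs

section TopTwo

variable {α : Type*} [LinearOrder α] {S : Finset α} {M m : α}

theorem lt_of_isGreatest_erase (hM : IsGreatest (S : Set α) M)
    (hm : IsGreatest (S.erase M : Set α) m) : m < M :=
  (hM.2 (Finset.mem_of_mem_erase hm.1)).lt_of_ne (Finset.ne_of_mem_erase hm.1)

theorem lt_of_mem_erase_of_isGreatest (hM : IsGreatest (S : Set α) M) :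
    ∀ x ∈ S.erase M, x < M :=
  fun _ hx => (hM.2 (Finset.mem_of_mem_erase hx)).lt_of_ne (Finset.ne_of_mem_erase hx)

theorem lt_of_mem_erase_of_isGreatest_erase (hm : IsGreatest (S.erase M : Set α) m) :
    ∀ x ∈ S.erase m, x ≠ M → x < m :=
  fun _ hx hxM => (hm.2 (Finset.mem_erase.mpr ⟨hxM, Finset.mem_of_mem_erase hx⟩)).lt_of_ne
    (Finset.ne_of_mem_erase hx)

theorem eq_of_lt_of_isGreatest_erase (hm : IsGreatest (S.erase M : Set α) m) {y : α}
    (hy : y ∈ S) (hmy : m < y) : y = M := by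
  by_contra hne
  exact (hm.2 (Finset.mem_erase.mpr ⟨hne, hy⟩)).not_gt hmy

theorem isGreatest_erase_of_isGreatest_erase (hM : IsGreatest (S : Set α) M)
    (hm : IsGreatest (S.erase M : Set α) m) : IsGreatest (S.erase m : Set α) M :=
  ⟨Finset.mem_erase.mpr ⟨(lt_of_isGreatest_erase hM hm).ne', hM.1⟩,
    fun _ hx => hM.2 (Finset.mem_of_mem_erase hx)⟩

theorem exists_isGreatest_erase (hM : M ∈ S) (hS : 2 ≤ S.card) :
    ∃ m, IsGreatest (S.erase M : Set α) m :=
  ⟨_, Finset.isGreatest_max' _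
    (Finset.card_pos.mp (by rw [Finset.card_erase_of_mem hM]; omega))⟩

theorem mem_and_atMostOneAbove_iff (hM : IsGreatest (S : Set α) M)
    (hm : IsGreatest (S.erase M : Set α) m) {x : α} :
    (x ∈ S ∧ ∀ y ∈ S, ∀ z ∈ S, x < y → x < z → y = z) ↔ x = M ∨ x = m := by
  have hmM := lt_of_isGreatest_erase hM hm
  constructor
  · rintro ⟨hx, h⟩
    by_contra! hxMm
    have hxm : x < m := (hm.2 (Finset.mem_erase.mpr ⟨hxMm.1, hx⟩)).lt_of_ne hxMm.2
    exact hmM.ne' (h M hM.1 m (Finset.mem_of_mem_erase hm.1) (hxm.trans hmM) hxm)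
  · rintro (rfl | rfl)
    · exact ⟨hM.1, fun y hy _ _ hxy _ => ((hM.2 hy).not_gt hxy).elim⟩
    · exact ⟨Finset.mem_of_mem_erase hm.1, fun y hy z hz hxy hxz =>
        (eq_of_lt_of_isGreatest_erase hm hy hxy).trans
          (eq_of_lt_of_isGreatest_erase hm hz hxz).symm⟩

end TopTwo

noncomputable def avoiders (S : Finset ℕ) : Finset (List ℕ) :=
  {l ∈ S.val.lists.toFinset | Avoids123And132 l}

theorem mem_avoiders {S : Finset ℕ} {l : List ℕ} :
    l ∈ avoiders S ↔ S.val = l ∧ Avoids123And132 l := by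
  simp [avoiders]

theorem cons_mem_avoiders {S : Finset ℕ} {x : ℕ} {r : List ℕ} :
    x :: r ∈ avoiders S ↔
      (x ∈ S ∧ ∀ y ∈ S, ∀ z ∈ S, x < y → x < z → y = z) ∧
        r ∈ avoiders (S.erase x) := by
  simp only [mem_avoiders, avoids123And132_cons, Finset.erase_val]
  constructor
  · rintro ⟨hS, hr, hx⟩
    have hxS : x ∈ S := by rw [← Finset.mem_val, hS]; exact List.mem_cons_self
    have hmem : ∀ y ∈ S, x < y → y ∈ r := fun y hy hxy => by
      rw [← Finset.mem_val, hS, Multiset.mem_coe] at hy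
      exact (List.mem_cons.mp hy).resolve_left hxy.ne'
    have : Std.Symm fun y z => x < y → x < z → y = z :=
      ⟨fun _ _ h hz hy => (h hy hz).symm⟩
    refine ⟨⟨hxS, fun y hy z hz hxy hxz => ?_⟩,
      by rw [hS, Multiset.coe_erase, List.erase_cons_head], hr⟩
    by_contra hyz
    exact hyz (List.Pairwise.forall (List.pairwise_iff_forall_sublist.mpr (hx _ _))
      (hmem y hy hxy) (hmem z hz hxz) hyz hxy hxz)
  · rintro ⟨⟨hxS, hx⟩, hS, hr⟩
    refine ⟨by rw [← Multiset.cons_erase hxS, hS]; rfl, hr, fun y z hs => ?_⟩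
    have hr : ∀ w ∈ r, w ∈ S := fun w hw => by
      rw [← Multiset.mem_coe, ← hS] at hw
      exact Finset.mem_of_mem_erase hw
    exact hx y (hr y (hs.subset (by simp))) z (hr z (hs.subset (by simp)))

theorem avoiders_eq_union {S : Finset ℕ} {M m : ℕ} (hM : IsGreatest (S : Set ℕ) M)
    (hm : IsGreatest (S.erase M : Set ℕ) m) :
    avoiders S =
      (avoiders (S.erase M)).image (M :: ·) ∪ (avoiders (S.erase m)).image (m :: ·) := by
  ext (_ | ⟨x, r⟩)
  · simp [mem_avoiders, Finset.ne_empty_of_mem hM.1]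
  · rw [cons_mem_avoiders, mem_and_atMostOneAbove_iff hM hm]
    simp only [Finset.mem_union, Finset.mem_image, List.cons.injEq]
    constructor
    · rintro ⟨rfl | rfl, hr⟩
      exacts [Or.inl ⟨r, hr, rfl, rfl⟩, Or.inr ⟨r, hr, rfl, rfl⟩]
    · rintro (⟨r, hr, rfl, rfl⟩ | ⟨r, hr, rfl, rfl⟩)
      exacts [⟨Or.inl rfl, hr⟩, ⟨Or.inr rfl, hr⟩]

theorem sum_avoiders {R : Type*} [AddCommMonoid R] {S : Finset ℕ} {M m : ℕ}
    (hM : IsGreatest (S : Set ℕ) M) (hm : IsGreatest (S.erase M : Set ℕ) m)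
    (f : List ℕ → R) :
    ∑ l ∈ avoiders S, f l =
      ∑ r ∈ avoiders (S.erase M), f (M :: r) + ∑ r ∈ avoiders (S.erase m), f (m :: r) := by
  rw [avoiders_eq_union hM hm, Finset.sum_union, Finset.sum_image, Finset.sum_image]
  · simp
  · simp
  · simp [Finset.disjoint_left, (lt_of_isGreatest_erase hM hm).ne]

theorem avoiders_singleton (a : ℕ) : avoiders {a} = {[a]} := by
  ext l
  rw [Finset.mem_singleton, mem_avoiders, Finset.singleton_val, ← Multiset.coe_singleton,
    Multiset.coe_eq_coe, List.singleton_perm, eq_comm, and_iff_left_iff_imp]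
  rintro rfl x y z hs
  exact absurd hs.length_le (by simp)

theorem ddescents_pair (a b : ℕ) : ddescents [a, b] = 0 := rfl

theorem ddescents_cons_cons_cons (a b c : ℕ) (l : List ℕ) :
    ddescents (a :: b :: c :: l) = ddescents (b :: c :: l) + if b < a ∧ c < b then 1 else 0 := by
  simp only [ddescents, List.length_cons, Finset.card_filter,
    show l.length + 1 + 1 + 1 - 2 = l.length + 1 by omega, Finset.sum_range_succ']
  simp

theorem ddescents_cons_of_lt {a b : ℕ} (h : a < b) (l : List ℕ) :
    ddescents (a :: b :: l) = ddescents (b :: l) := by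
  cases l with
  | nil => rfl
  | cons c l => simp [ddescents_cons_cons_cons, h.not_gt]

noncomputable def prefixWeight (p : List ℕ) (S : Finset ℕ) : ℕ[X] :=
  ∑ r ∈ avoiders S, X ^ ddescents (p ++ r)

theorem prefixWeight_eq_add {S : Finset ℕ} {M m : ℕ} (hM : IsGreatest (S : Set ℕ) M)
    (hm : IsGreatest (S.erase M : Set ℕ) m) (p : List ℕ) :
    prefixWeight p S =
      prefixWeight (p ++ [M]) (S.erase M) + prefixWeight (p ++ [m]) (S.erase m) := by
  simp [prefixWeight, sum_avoiders hM hm]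

theorem prefixWeight_cons_cons_cons (a b c : ℕ) (p : List ℕ) (S : Finset ℕ) :
    prefixWeight (a :: b :: c :: p) S =
      X ^ (if b < a ∧ c < b then 1 else 0) * prefixWeight (b :: c :: p) S := by
  simp only [prefixWeight, Finset.mul_sum, List.cons_append, ddescents_cons_cons_cons, pow_add,
    mul_comm]

theorem prefixWeight_cons_of_lt {a b : ℕ} (h : a < b) (p : List ℕ) (S : Finset ℕ) :
    prefixWeight (a :: b :: p) S = prefixWeight (b :: p) S := by
  simp only [prefixWeight, List.cons_append, ddescents_cons_of_lt h]

theorem prefixWeight_pair_eq_X_mul {a b : ℕ} {S : Finset ℕ} (hS : S.Nonempty)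
    (hb : ∀ x ∈ S, x < b) (h : b < a) : prefixWeight [a, b] S = X * prefixWeight [b] S := by
  rw [prefixWeight, prefixWeight, Finset.mul_sum]
  refine Finset.sum_congr rfl fun r hr => ?_
  cases r with
  | nil => simp [mem_avoiders, hS.ne_empty] at hr
  | cons c r =>
    have hc : c < b := hb c (cons_mem_avoiders.mp hr).1.1
    simp [ddescents_cons_cons_cons, hc, h, pow_succ, mul_comm]

theorem prefixWeight_singleton (p : List ℕ) (a : ℕ) :
    prefixWeight p {a} = X ^ ddescents (p ++ [a]) := by
  simp [prefixWeight, avoiders_singleton]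

theorem prefixWeight_eq_pow : ∀ n,
    (∀ (S : Finset ℕ) t, S.card = n + 1 → (∀ x ∈ S, x < t) →
      prefixWeight [t] S = (X + 1) ^ n) ∧
    (∀ (S : Finset ℕ) M m t, S.card = n + 2 → IsGreatest (S : Set ℕ) M →
      IsGreatest (S.erase M : Set ℕ) m → m < t →
        prefixWeight [t, m] (S.erase m) = (X + 1) ^ n)
  | 0 => by
    refine ⟨fun S t hS _ => ?_, fun S M m t hS hM hm _ => ?_⟩
    · obtain ⟨a, rfl⟩ := Finset.card_eq_one.mp hS
      simp [prefixWeight_singleton, ddescents_pair]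
    · have hSm : {M} = S.erase m := Finset.eq_of_subset_of_card_le
        (Finset.singleton_subset_iff.mpr (isGreatest_erase_of_isGreatest_erase hM hm).1)
        (by rw [Finset.card_erase_of_mem (Finset.mem_of_mem_erase hm.1), hS]; rfl)
      simp [← hSm, prefixWeight_singleton, ddescents_cons_cons_cons, ddescents_pair,
        (lt_of_isGreatest_erase hM hm).not_gt]
  | n + 1 => by
    obtain ⟨hP, hQ⟩ := prefixWeight_eq_pow n
    refine ⟨fun S t hS ht => ?_, fun S M v t hS hM hv hvt => ?_⟩
    · obtain ⟨M, hM⟩ : ∃ M, IsGreatest (S : Set ℕ) M :=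
        ⟨_, S.isGreatest_max' (Finset.card_pos.mp (by omega))⟩
      obtain ⟨m, hm⟩ := exists_isGreatest_erase hM.1 (by omega)
      have hSM : (S.erase M).card = n + 1 := by rw [Finset.card_erase_of_mem hM.1]; omega
      rw [prefixWeight_eq_add hM hm, List.singleton_append, List.singleton_append,
        prefixWeight_pair_eq_X_mul (Finset.card_pos.mp (by omega))
          (lt_of_mem_erase_of_isGreatest hM) (ht _ hM.1),
        hP _ _ hSM (lt_of_mem_erase_of_isGreatest hM),
        hQ _ _ _ _ hS hM hm (ht _ (Finset.mem_of_mem_erase hm.1))]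
      ring
    · set T := S.erase v
      have hMT : IsGreatest (T : Set ℕ) M := isGreatest_erase_of_isGreatest_erase hM hv
      have hT : T.card = n + 2 := by
        rw [Finset.card_erase_of_mem (Finset.mem_of_mem_erase hv.1)]; omega
      have hTM : (T.erase M).card = n + 1 := by rw [Finset.card_erase_of_mem hMT.1]; omega
      have hvM := lt_of_isGreatest_erase hM hv
      obtain ⟨m, hm⟩ := exists_isGreatest_erase hMT.1 (by omega)
      have hmv : m < v := lt_of_mem_erase_of_isGreatest_erase hv _ (Finset.mem_of_mem_erase hm.1)
        (Finset.ne_of_mem_erase hm.1)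
      rw [prefixWeight_eq_add hMT hm, List.cons_append, List.cons_append, List.nil_append,
        List.cons_append, List.cons_append, List.nil_append, prefixWeight_cons_cons_cons,
        prefixWeight_cons_cons_cons, if_neg fun h => hvM.not_gt h.2, if_pos ⟨hvt, hmv⟩,
        prefixWeight_cons_of_lt hvM, hP _ _ hTM (lt_of_mem_erase_of_isGreatest hMT),
        hQ _ _ _ _ hT hMT hm hmv]
      ring

theorem sum_avoiders_X_pow_ddescents {S : Finset ℕ} {n : ℕ} (hS : S.card = n + 3) :
    ∑ l ∈ avoiders S, (X : ℕ[X]) ^ ddescents l = (X + 1) ^ (n + 1) + 2 * (X + 1) ^ n := by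
  change prefixWeight [] S = _
  obtain ⟨M, hM⟩ : ∃ M, IsGreatest (S : Set ℕ) M :=
    ⟨_, S.isGreatest_max' (Finset.card_pos.mp (by omega))⟩
  obtain ⟨m, hm⟩ := exists_isGreatest_erase hM.1 (by omega)
  have hMT := isGreatest_erase_of_isGreatest_erase hM hm
  have hSM : (S.erase M).card = n + 2 := by rw [Finset.card_erase_of_mem hM.1]; omega
  have hT : (S.erase m).card = n + 2 := by
    rw [Finset.card_erase_of_mem (Finset.mem_of_mem_erase hm.1)]; omega
  have hTM : ((S.erase m).erase M).card = n + 1 := by rw [Finset.card_erase_of_mem hMT.1]; omega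
  obtain ⟨m', hm'⟩ := exists_isGreatest_erase hMT.1 (by omega)
  have hm'm : m' < m := lt_of_mem_erase_of_isGreatest_erase hm _ (Finset.mem_of_mem_erase hm'.1)
    (Finset.ne_of_mem_erase hm'.1)
  rw [prefixWeight_eq_add hM hm, List.nil_append, List.nil_append, prefixWeight_eq_add hMT hm',
    List.singleton_append, List.singleton_append,
    prefixWeight_cons_of_lt (lt_of_isGreatest_erase hM hm),
    (prefixWeight_eq_pow _).1 _ _ hSM (lt_of_mem_erase_of_isGreatest hM),
    (prefixWeight_eq_pow _).1 _ _ hTM (lt_of_mem_erase_of_isGreatest hMT),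
    (prefixWeight_eq_pow _).2 _ _ _ _ hT hMT hm' hm'm]
  ring

theorem card_filter_eq_coeff_sum {α : Type*} (s : Finset α) (f : α → ℕ) (k : ℕ) :
    {a ∈ s | f a = k}.card = (∑ a ∈ s, (X : ℕ[X]) ^ f a).coeff k := by
  simp [Polynomial.finsetSum_coeff, Polynomial.coeff_X_pow, Finset.sum_boole, eq_comm]

theorem permWord_injective (n : ℕ) : Function.Injective (permWord (n := n)) := by
  intro π σ h
  ext i
  simpa using congrFun (List.ofFn_injective h) i

theorem image_permWord (n : ℕ) :
    (Finset.univ : Finset (Equiv.Perm (Fin n))).image permWord =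
      (Finset.Icc 1 n).val.lists.toFinset := by
  refine Finset.eq_of_subset_of_card_le (fun l hl => ?_) ?_
  · obtain ⟨π, -, rfl⟩ := Finset.mem_image.mp hl
    have hnodup : (permWord π).Nodup :=
      List.nodup_ofFn.mpr fun i j h => π.injective (Fin.ext (by simpa using h))
    rw [Multiset.mem_toFinset, Multiset.mem_lists_iff, Multiset.quot_mk_to_coe,
      Multiset.Nodup.ext (Finset.nodup _) (Multiset.coe_nodup.mpr hnodup)]
    intro a
    simp only [Finset.mem_val, Finset.mem_Icc, Multiset.mem_coe, permWord, List.mem_ofFn]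
    constructor
    · rintro ⟨ha1, han⟩
      exact ⟨π.symm ⟨a - 1, by omega⟩, by rw [Equiv.apply_symm_apply, Fin.val_mk]; omega⟩
    · rintro ⟨i, rfl⟩
      exact ⟨by omega, (π i).isLt⟩
  · rw [Finset.card_image_of_injective _ (permWord_injective n), Finset.card_univ,
      Fintype.card_perm, Fintype.card_fin,
      Multiset.toFinset_card_of_nodup (Multiset.lists_nodup_finset _), ← Finset.coe_toList,
      Multiset.lists_coe, Multiset.coe_card, List.length_permutations, Finset.length_toList,
      Nat.card_Icc, Nat.add_sub_cancel]

theorem acount_eq_card_avoiders (n k : ℕ) :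
    acount n k ddescents [[1, 2, 3], [1, 3, 2]] =
      {l ∈ avoiders (Finset.Icc 1 n) | ddescents l = k}.card := by
  rw [acount, ← Finset.card_image_of_injective _ (permWord_injective n),
    ← Finset.filter_image (p := fun l => AvoidsAll l _ ∧ ddescents l = k), image_permWord,
    avoiders, Finset.filter_filter]
  simp only [avoidsAll_iff_avoids123And132]

theorem stmt13 (n k : ℕ) (hn : 3 ≤ n) :
    acount n k ddescents [[1,2,3],[1,3,2]] =
      Nat.choose (n - 2) k + 2 * Nat.choose (n - 3) k := by
  obtain ⟨n, rfl⟩ := Nat.exists_eq_add_of_le' hn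
  rw [acount_eq_card_avoiders, card_filter_eq_coeff_sum,
    sum_avoiders_X_pow_ddescents (by rw [Nat.card_Icc]; rfl), coeff_add, coeff_ofNat_mul,
    coeff_X_add_one_pow, coeff_X_add_one_pow]
  rfl
end
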